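/- arXiv:1012.4263 — 2 statements merged into one kernel-verified Lean document; each statement's English description precedes it below -/
import Mathlib

section
/- For every index i with 0 ≤ i ≤ n−1, LF[i] = C[BWT[i]] + |{ j : 0 ≤ j ≤ i and BWT[j] = BWT[i] }| − 1, where for a character c, C[c] = |{ k : 0 ≤ k ≤ n−1 and S[k] < c }| is the overall number of character occurrences in S strictly smaller than c. -/
/-- Length of the longest common prefix of two lists. -/
def lcpLen {α : Type*} [DecidableEq α] : List α → List α → ℕ
  | a :: u, b :: v => if a = b then lcpLen u v + 1 else 0
  | _, _ => 0

/-- The suffix of `S` starting at position `i` (as a list). -/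
def sfx {α : Type*} {n : ℕ} (S : Fin n → α) (i : ℕ) : List α :=
  (List.ofFn S).drop i
/-- Burrows–Wheeler transform: `BWT[i] = S[SUF[i]-1]` if `SUF[i] ≠ 0`,
    and the sentinel `S[n-1]` otherwise. -/
def bwtOf {α : Type*} {n : ℕ} (hn : 0 < n) (S : Fin n → α)
    (SUF : Equiv.Perm (Fin n)) (i : Fin n) : α :=
  if (SUF i : ℕ) = 0 then S ⟨n - 1, by omega⟩
  else S ⟨(SUF i : ℕ) - 1, lt_of_le_of_lt (Nat.sub_le _ _) (Fin.isLt _)⟩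

/-- LF-mapping: `LF[i] = ISA[SUF[i]-1]` if `SUF[i] ≠ 0`, and `0` otherwise. -/
def lfOf {n : ℕ} (hn : 0 < n) (SUF : Equiv.Perm (Fin n)) (i : Fin n) : Fin n :=
  if (SUF i : ℕ) = 0 then ⟨0, hn⟩
  else SUF.symm ⟨(SUF i : ℕ) - 1, lt_of_le_of_lt (Nat.sub_le _ _) (Fin.isLt _)⟩

lemma sfx_cons {α : Type*} {n : ℕ} (S : Fin n → α) (k : ℕ) (hk : k < n) :
    sfx S k = S ⟨k, hk⟩ :: sfx S (k+1) := by
  unfold sfx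
  rw [List.drop_eq_getElem_cons (by simpa using hk)]
  simp

lemma lex_cons_iff' {α : Type*} [LinearOrder α] {a b : α} {u v : List α} :
    List.Lex (· < ·) (a :: u) (b :: v) ↔ a < b ∨ (a = b ∧ List.Lex (· < ·) u v) := by
  constructor
  · intro h
    cases h with
    | cons h => exact Or.inr ⟨rfl, h⟩
    | rel h => exact Or.inl h
  · rintro (h | ⟨rfl, h⟩)
    · exact .rel h
    · exact .cons h

/-- `LF[i] = C[BWT[i]] + |{ j ≤ i : BWT[j] = BWT[i] }| - 1`, where
`C[c]` is the number of character occurrences in `S` strictly smaller than `c`. -/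
theorem lf_eq_count {α : Type*} [LinearOrder α] {n : ℕ} (hn : 0 < n)
    (S : Fin n → α)
    (hsent : ∀ k : Fin n, (k : ℕ) < n - 1 → S ⟨n - 1, by omega⟩ < S k)
    (SUF : Equiv.Perm (Fin n))
    (hSUF : ∀ i j : Fin n, i < j →
      List.Lex (· < ·) (sfx S ((SUF i : Fin n) : ℕ)) (sfx S ((SUF j : Fin n) : ℕ)))
    (i : Fin n) :
    ((lfOf hn SUF i : Fin n) : ℕ) =
      (Finset.univ.filter (fun k : Fin n => S k < bwtOf hn S SUF i)).card +
      (Finset.univ.filter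
        (fun j : Fin n => j ≤ i ∧ bwtOf hn S SUF j = bwtOf hn S SUF i)).card - 1 := by
  classical
  -- order ↔ lex
  have hlt_iff : ∀ t u : Fin n, t < u ↔
      List.Lex (· < ·) (sfx S ((SUF t : Fin n) : ℕ)) (sfx S ((SUF u : Fin n) : ℕ)) := by
    intro t u
    constructor
    · exact hSUF t u
    · intro hlex
      rcases lt_trichotomy t u with h | h | h
      · exact h
      · subst h; exact absurd hlex (asymm hlex)
      · exact absurd hlex (asymm (hSUF u t h))
  by_cases h0 : (SUF i : ℕ) = 0
  · -- sentinel case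
    have hLF : ((lfOf hn SUF i : Fin n) : ℕ) = 0 := by simp [lfOf, h0]
    have hcval : bwtOf hn S SUF i = S ⟨n-1, by omega⟩ := by simp [bwtOf, h0]
    have hC : (Finset.univ.filter (fun k : Fin n => S k < bwtOf hn S SUF i)).card = 0 := by
      rw [Finset.card_eq_zero, Finset.filter_eq_empty_iff]
      intro k _
      rw [hcval]
      rcases Nat.lt_or_ge (k : ℕ) (n-1) with hk | hk
      · exact not_lt.2 (le_of_lt (hsent k hk))
      · have : k = ⟨n-1, by omega⟩ := Fin.ext (by simp only [Fin.val_mk]; have := k.isLt; omega)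
        rw [this]; exact lt_irrefl _
    have hR : (Finset.univ.filter
        (fun j : Fin n => j ≤ i ∧ bwtOf hn S SUF j = bwtOf hn S SUF i)).card = 1 := by
      rw [Finset.card_eq_one]
      refine ⟨i, ?_⟩
      ext j
      simp only [Finset.mem_filter, Finset.mem_univ, true_and, Finset.mem_singleton]
      constructor
      · rintro ⟨hji, hbwt⟩
        by_contra hne
        have hj0 : (SUF j : ℕ) ≠ 0 := by
          intro h
          exact hne (SUF.injective (Fin.ext (by rw [h, h0])))
        rw [hcval, bwtOf, if_neg hj0] at hbwt
        have hlt : (SUF j : ℕ) - 1 < n - 1 := by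
          have := (SUF j).isLt; omega
        exact absurd hbwt (ne_of_gt (hsent _ hlt))
      · rintro rfl; exact ⟨le_refl _, rfl⟩
    rw [hLF, hC, hR]
  · -- main case
    have hn2 : 2 ≤ n := by have := (SUF i).isLt; omega
    have hplt : (SUF i : ℕ) - 1 < n := lt_of_le_of_lt (Nat.sub_le _ _) (Fin.isLt _)
    set p : Fin n := ⟨(SUF i : ℕ) - 1, hplt⟩ with hpdef
    have hpn1 : (p : ℕ) < n - 1 := by
      have := (SUF i).isLt; simp only [hpdef]; omega
    have hcval : bwtOf hn S SUF i = S p := by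
      rw [bwtOf, if_neg h0]
    set c := bwtOf hn S SUF i with hc
    -- sentinel is < c
    have hsc : S ⟨n-1, by omega⟩ < c := hcval ▸ hsent p hpn1
    -- LF value as a count of lex-smaller suffixes
    have hLF : ((lfOf hn SUF i : Fin n) : ℕ) =
        (Finset.univ.filter
          (fun k : Fin n => List.Lex (· < ·) (sfx S (k : ℕ)) (sfx S (p : ℕ)))).card := by
      rw [lfOf, if_neg h0]
      have h1 : ∀ t : Fin n, t < SUF.symm p ↔
          List.Lex (· < ·) (sfx S ((SUF t : Fin n) : ℕ)) (sfx S (p : ℕ)) := by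
        intro t
        have := hlt_iff t (SUF.symm p)
        rwa [SUF.apply_symm_apply] at this
      have h2 : ((SUF.symm p : Fin n) : ℕ) = (Finset.Iio (SUF.symm p)).card := by
        rw [Fin.card_Iio]
      rw [h2]
      have h3 : Finset.Iio (SUF.symm p) =
          Finset.univ.filter (fun t : Fin n =>
            List.Lex (· < ·) (sfx S ((SUF t : Fin n) : ℕ)) (sfx S (p : ℕ))) := by
        ext t
        simp [Finset.mem_Iio, h1 t]
      rw [h3]
      exact Finset.card_bij (fun t _ => SUF t)
        (by intro t ht; simp only [Finset.mem_filter, Finset.mem_univ, true_and] at ht ⊢; exact ht)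
        (by intro a _ b _ h; exact SUF.injective h)
        (by
          intro k hk
          refine ⟨SUF.symm k, ?_, by simp⟩
          simp only [Finset.mem_filter, Finset.mem_univ, true_and,
            SUF.apply_symm_apply] at hk ⊢
          exact hk)
    -- split the lex count
    have hsplit : ∀ k : Fin n,
        List.Lex (· < ·) (sfx S (k : ℕ)) (sfx S (p : ℕ)) ↔
        (S k < c ∨ (S k = c ∧ List.Lex (· < ·) (sfx S ((k : ℕ)+1)) (sfx S ((p : ℕ)+1)))) := by
      intro k
      rw [sfx_cons S (k : ℕ) k.isLt, sfx_cons S (p : ℕ) p.isLt, lex_cons_iff']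
      simp only [Fin.eta]
      rw [hcval]
    have hcount : (Finset.univ.filter
          (fun k : Fin n => List.Lex (· < ·) (sfx S (k : ℕ)) (sfx S (p : ℕ)))).card =
        (Finset.univ.filter (fun k : Fin n => S k < c)).card +
        (Finset.univ.filter (fun k : Fin n => S k = c ∧
          List.Lex (· < ·) (sfx S ((k : ℕ)+1)) (sfx S ((p : ℕ)+1)))).card := by
      rw [Finset.filter_congr (fun k _ => by rw [hsplit k]), Finset.filter_or,
        Finset.card_union_of_disjoint]
      rw [Finset.disjoint_filter]
      intro k _ hk hk2
      exact absurd hk2.1 (ne_of_lt hk)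
    -- bijection for the second count
    have hbij : (Finset.univ.filter (fun k : Fin n => S k = c ∧
          List.Lex (· < ·) (sfx S ((k : ℕ)+1)) (sfx S ((p : ℕ)+1)))).card =
        (Finset.univ.filter (fun j : Fin n => j < i ∧ bwtOf hn S SUF j = c)).card := by
      refine (Finset.card_bij (fun j _ => (⟨(SUF j : ℕ) - 1,
        lt_of_le_of_lt (Nat.sub_le _ _) (Fin.isLt _)⟩ : Fin n)) ?_ ?_ ?_).symm
      · -- maps into
        intro j hj
        simp only [Finset.mem_filter, Finset.mem_univ, true_and] at hj ⊢
        obtain ⟨hji, hbwt⟩ := hj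
        have hj0 : (SUF j : ℕ) ≠ 0 := by
          intro h
          rw [bwtOf, if_pos h] at hbwt
          exact absurd hbwt (ne_of_lt hsc)
        rw [bwtOf, if_neg hj0] at hbwt
        refine ⟨hbwt, ?_⟩
        have := (hlt_iff j i).1 hji
        have e1 : (SUF j : ℕ) - 1 + 1 = (SUF j : ℕ) := by omega
        have e2 : (p : ℕ) + 1 = (SUF i : ℕ) := by simp only [hpdef]; omega
        rw [e1, e2]
        exact this
      · -- injective
        intro a ha b hb h
        simp only [Finset.mem_filter, Finset.mem_univ, true_and] at ha hb
        have ha0 : (SUF a : ℕ) ≠ 0 := by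
          intro h'
          have := ha.2
          rw [bwtOf, if_pos h'] at this
          exact absurd this (ne_of_lt hsc)
        have hb0 : (SUF b : ℕ) ≠ 0 := by
          intro h'
          have := hb.2
          rw [bwtOf, if_pos h'] at this
          exact absurd this (ne_of_lt hsc)
        have : (SUF a : ℕ) = (SUF b : ℕ) := by
          have := Fin.mk.inj_iff.1 h
          omega
        exact SUF.injective (Fin.ext this)
      · -- surjective
        intro k hk
        simp only [Finset.mem_filter, Finset.mem_univ, true_and] at hk
        obtain ⟨hkc, hklex⟩ := hk
        have hkn1 : (k : ℕ) < n - 1 := by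
          by_contra h
          have : k = ⟨n-1, by omega⟩ := Fin.ext (by simp only [Fin.val_mk]; have := k.isLt; omega)
          rw [this] at hkc
          exact absurd hkc (ne_of_lt hsc)
        have hk1 : (k : ℕ) + 1 < n := by omega
        refine ⟨SUF.symm ⟨(k : ℕ) + 1, hk1⟩, ?_, ?_⟩
        · simp only [Finset.mem_filter, Finset.mem_univ, true_and]
          constructor
          · rw [hlt_iff, SUF.apply_symm_apply]
            have e2 : ((SUF i : Fin n) : ℕ) = (p : ℕ) + 1 := by simp only [hpdef]; omega
            rw [e2]
            exact hklex
          · rw [bwtOf]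
            have h1 : ((SUF (SUF.symm ⟨(k : ℕ) + 1, hk1⟩) : Fin n) : ℕ) = (k : ℕ) + 1 := by
              rw [SUF.apply_symm_apply]
            rw [if_neg (by omega)]
            have : ((SUF (SUF.symm ⟨(k : ℕ) + 1, hk1⟩) : Fin n) : ℕ) - 1 = (k : ℕ) := by omega
            rw [show (⟨((SUF (SUF.symm ⟨(k : ℕ) + 1, hk1⟩) : Fin n) : ℕ) - 1, _⟩ : Fin n)
              = k from Fin.ext this]
            exact hkc
        · apply Fin.ext
          simp only [SUF.apply_symm_apply, Fin.val_mk]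
          omega
    -- lt vs le counts
    have hIns : Finset.univ.filter (fun j : Fin n => j ≤ i ∧ bwtOf hn S SUF j = c) =
        insert i (Finset.univ.filter (fun j : Fin n => j < i ∧ bwtOf hn S SUF j = c)) := by
      ext j
      simp only [Finset.mem_filter, Finset.mem_univ, true_and, Finset.mem_insert]
      constructor
      · rintro ⟨hle, hb⟩
        rcases eq_or_lt_of_le hle with h | h
        · exact Or.inl h
        · exact Or.inr ⟨h, hb⟩
      · rintro (rfl | ⟨h, hb⟩)
        · exact ⟨le_refl _, hc.symm⟩
        · exact ⟨le_of_lt h, hb⟩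
    have hcard : (Finset.univ.filter (fun j : Fin n => j ≤ i ∧ bwtOf hn S SUF j = c)).card =
        (Finset.univ.filter (fun j : Fin n => j < i ∧ bwtOf hn S SUF j = c)).card + 1 := by
      rw [hIns, Finset.card_insert_of_notMem (by simp)]
    rw [hLF, hcount, hbij, hcard]
    omega
end

section
/- The LF-mapping is a bijection of Fin n. -/
/-! The sentinel suffix `S_{n-1}` is lexicographically smallest, so `SUF[0] = n - 1`, i.e.
`ISA[n-1] = 0`. Hence `LF = ISA ∘ (· - 1) ∘ SUF` with cyclic predecessor `0 ↦ n - 1`: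
a conjugate of the rotation `finRotate n`, and in particular a bijection. -/

theorem List.rel_of_lex_cons_singleton {α : Type*} {r : α → α → Prop} {a b : α} {l : List α}
    (h : List.Lex r (a :: l) [b]) : r a b := by
  cases h with
  | rel h => exact h
  | cons h => exact (List.not_lex_nil h).elim

theorem sfx_eq_cons {α : Type*} {n : ℕ} (S : Fin n → α) {k : ℕ} (hk : k < n) :
    sfx S k = S ⟨k, hk⟩ :: sfx S (k + 1) := by
  simp [sfx, List.drop_eq_getElem_cons (l := List.ofFn S) (by simpa using hk)]

theorem sfx_last {α : Type*} {n : ℕ} (S : Fin n → α) (hn : 0 < n) :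
    sfx S (n - 1) = [S ⟨n - 1, by omega⟩] := by
  rw [sfx_eq_cons S (by omega)]
  simp only [sfx, List.cons.injEq, List.drop_eq_nil_iff, List.length_ofFn, true_and]
  omega

theorem not_lex_sfx_last {α : Type*} [Preorder α] {n : ℕ} (hn : 0 < n) (S : Fin n → α)
    (hsent : ∀ k : Fin n, (k : ℕ) < n - 1 → S ⟨n - 1, by omega⟩ < S k) (k : Fin n) :
    ¬ List.Lex (· < ·) (sfx S k) (sfx S (n - 1)) := by
  rw [sfx_eq_cons S k.isLt, sfx_last S hn]
  intro h
  have hlt := List.rel_of_lex_cons_singleton h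
  rcases (Nat.le_sub_one_of_lt k.isLt).lt_or_eq with hk | hk
  · exact lt_asymm hlt (hsent k hk)
  · simp only [← hk, Fin.eta] at hlt
    exact lt_irrefl _ hlt

theorem suffixArray_symm_last_eq_zero {α : Type*} [Preorder α] {n : ℕ} (hn : 0 < n) (S : Fin n → α)
    (hsent : ∀ k : Fin n, (k : ℕ) < n - 1 → S ⟨n - 1, by omega⟩ < S k)
    (SUF : Equiv.Perm (Fin n))
    (hSUF : ∀ i j : Fin n, i < j →
      List.Lex (· < ·) (sfx S ((SUF i : Fin n) : ℕ)) (sfx S ((SUF j : Fin n) : ℕ))) :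
    SUF.symm ⟨n - 1, by omega⟩ = ⟨0, hn⟩ := by
  by_contra hne
  have hpos : (⟨0, hn⟩ : Fin n) < SUF.symm ⟨n - 1, by omega⟩ :=
    lt_of_le_of_ne (Nat.zero_le _) fun h ↦ hne h.symm
  have h := hSUF _ _ hpos
  rw [Equiv.apply_symm_apply] at h
  exact not_lex_sfx_last hn S hsent _ h

theorem lfOf_eq_conj_finRotate_symm {n : ℕ} (hn : 0 < n) (SUF : Equiv.Perm (Fin n))
    (hlast : SUF.symm ⟨n - 1, by omega⟩ = ⟨0, hn⟩) :
    lfOf hn SUF = SUF.trans ((finRotate n).symm.trans SUF.symm) := by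
  obtain ⟨m, rfl⟩ := Nat.exists_eq_add_one_of_ne_zero hn.ne'
  funext i
  simp only [lfOf, Equiv.trans_apply]
  split_ifs with h0
  · have hzero : SUF i = 0 := Fin.ext h0
    rw [hzero, finRotate_symm_apply, zero_sub, ← hlast]
    congr 1
    ext
    simp
  · exact congrArg SUF.symm
      (Fin.ext (coe_finRotate_symm_of_ne_zero (Fin.val_ne_zero_iff.mp h0)).symm)

/-- The LF-mapping is a bijection of `Fin n`. -/
theorem lf_bijective {α : Type*} [LinearOrder α] {n : ℕ} (hn : 0 < n)
    (S : Fin n → α)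
    (hsent : ∀ k : Fin n, (k : ℕ) < n - 1 → S ⟨n - 1, by omega⟩ < S k)
    (SUF : Equiv.Perm (Fin n))
    (hSUF : ∀ i j : Fin n, i < j →
      List.Lex (· < ·) (sfx S ((SUF i : Fin n) : ℕ)) (sfx S ((SUF j : Fin n) : ℕ))) :
    Function.Bijective (lfOf hn SUF) := by
  rw [lfOf_eq_conj_finRotate_symm hn SUF (suffixArray_symm_last_eq_zero hn S hsent SUF hSUF)]
  exact Equiv.bijective _
end
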